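/- arXiv:2404.07957 — 5 statements merged into one kernel-verified Lean document; each statement's English description precedes it below -/
import Mathlib

section
/- Let M and N be ℤ²-graded bimodules over a ℤ²-graded algebra B, with deformed module structures a*x = λ^{n₂(a)n₁(x)} ax, x*b = λ^{n₂(x)n₁(b)} xb. Then the map T_θ: (M ⊗_B N)_θ → M_θ ⊗_{B_θ} N_θ defined on homogeneous elements by T_θ(x ⊗ y) = λ^{−n₂(x)n₁(y)} x ⊗_θ y is well defined, i.e. it respects the balancing relations: T_θ(xb ⊗ y) = T_θ(x ⊗ by) for all homogeneous x ∈ M, b ∈ B, y ∈ N. -/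
theorem zpow_add_smul_eq_of_zpow_smul_eq {G₀ V : Type*} [GroupWithZero G₀] [MulAction G₀ V]
    {c : G₀} (hc : c ≠ 0) {a b : ℤ} {u v : V} (h : c ^ a • u = c ^ b • v) (e : ℤ) :
    c ^ (e + a) • u = c ^ (e + b) • v := by
  rw [zpow_add₀ hc, zpow_add₀ hc, mul_smul, mul_smul, h]

/-- The map `T_θ(x ⊗ y) = λ^{−n₂(x)n₁(y)} x ⊗_θ y` respects the balancing
relations: for homogeneous `x ∈ M`, `b ∈ B`, `y ∈ N`, `T_θ(xb ⊗ y) = T_θ(x ⊗ by)`,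
where `⊗_θ` is balanced over the deformed algebra `B_θ` (deformed actions
`x*b = λ^{n₂(x)n₁(b)}xb`, `b*y = λ^{n₂(b)n₁(y)}by`). -/
theorem stmt_8 {B M N W : Type*} [Ring B] [Algebra ℂ B]
    [AddCommGroup M] [Module ℂ M] [AddCommGroup N] [Module ℂ N]
    [AddCommGroup W] [Module ℂ W]
    (l : ℂ) (hl : ‖l‖ = 1)
    (ℬ : ℤ × ℤ → Submodule ℂ B) (𝓜 : ℤ × ℤ → Submodule ℂ M) (𝓝 : ℤ × ℤ → Submodule ℂ N)
    (actM : M → B → M) (actN : B → N → N)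
    (tθ : M → N → W)
    (htθ_sl : ∀ (c : ℂ) (x : M) (y : N), tθ (c • x) y = c • tθ x y)
    (htθ_sr : ∀ (c : ℂ) (x : M) (y : N), tθ x (c • y) = c • tθ x y)
    (htθ_bal : ∀ (nx nb ny : ℤ × ℤ) (x : M) (b : B) (y : N),
      x ∈ 𝓜 nx → b ∈ ℬ nb → y ∈ 𝓝 ny →
      tθ (l ^ (nx.2 * nb.1) • actM x b) y = tθ x (l ^ (nb.2 * ny.1) • actN b y)) :
    ∀ (nx nb ny : ℤ × ℤ) (x : M) (b : B) (y : N),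
      x ∈ 𝓜 nx → b ∈ ℬ nb → y ∈ 𝓝 ny →
      l ^ (-((nx.2 + nb.2) * ny.1)) • tθ (actM x b) y
        = l ^ (-(nx.2 * (nb.1 + ny.1))) • tθ x (actN b y) := by
  intro nx nb ny x b y hx hb hy
  have hl0 : l ≠ 0 := norm_ne_zero_iff.mp (hl ▸ one_ne_zero)
  have hbal := htθ_bal nx nb ny x b y hx hb hy
  rw [htθ_sl, htθ_sr] at hbal
  -- Both prefactors are the balancing prefactors times λ^{-n₂(x)n₁(b) - (n₂(x)+n₂(b))n₁(y)}.
  have key := zpow_add_smul_eq_of_zpow_smul_eq hl0 hbal (-(nx.2 * nb.1) - (nx.2 + nb.2) * ny.1)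
  convert key using 3 <;> ring
end

section
/- Let Ω¹ be a ℤ²-graded B-bimodule with grading-compatible involution †, λ ∈ ℂ with |λ|=1, and define σ_θ on homogeneous two-tensors by σ_θ(ω ⊗ η) := Θ(ω,η) η ⊗ ω where Θ(ω,η) = λ^{n₂(ω)n₁(η) − n₂(η)n₁(ω)}. Then σ_θ is an involution (σ_θ² = id), a B_θ-bimodule map for the deformed actions, and satisfies †∘σ_θ = σ_θ^{−1}∘† where (ω⊗η)† := η†⊗ω† with ω† = λ^{n₁(ω)n₂(ω)}ω*. -/
/-!
On homogeneous tensors every identity has the form `λ ^ e • x ⊗ y = λ ^ e' • x ⊗ y`, so it reduces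
to `e = e'` in `ℤ`. Two facts produce the exponents: in the θ-balanced tensor product a homogeneous
`a ∈ B` moves across `⊗` at the cost of a power of `λ`, and `conj λ = λ⁻¹` since `|λ| = 1`.
-/

open ComplexConjugate

theorem zpow_smul_zpow_smul {K T : Type*} [GroupWithZero K] [MulAction K T] {x : K} (hx : x ≠ 0)
    (a b : ℤ) (v : T) : x ^ a • x ^ b • v = x ^ (a + b) • v := by
  rw [smul_smul, zpow_add₀ hx]

theorem Complex.conj_zpow_of_norm_eq_one {z : ℂ} (hz : ‖z‖ = 1) (a : ℤ) :
    conj (z ^ a) = z ^ (-a) := by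
  rw [map_zpow₀, ← Complex.inv_eq_conj hz, inv_zpow, zpow_neg]

section TwistedFlip

variable {B Ω T : Type*} [MulAction ℂ T] {l : ℂ} {ℬ : ℤ × ℤ → Set B} {Gr : ℤ × ℤ → Set Ω}
  {act : B → Ω → Ω} {t : Ω → Ω → T} {σ : T → T}

variable (l Gr t σ) in
def IsTwistedFlip : Prop :=
  ∀ (m n : ℤ × ℤ) (ω η : Ω), ω ∈ Gr m → η ∈ Gr n → σ (t ω η) = l ^ (m.2 * n.1 - n.2 * m.1) • t η ω

variable (l ℬ Gr act t) in
/-- The balancing condition of the tensor product over the deformed algebra `B_θ`, written with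
the single undeformed action `act` of the central bimodule. -/
def IsThetaBalanced [SMul ℂ Ω] : Prop :=
  ∀ (nω nb nη : ℤ × ℤ) (ω : Ω) (b : B) (η : Ω), ω ∈ Gr nω → b ∈ ℬ nb → η ∈ Gr nη →
    t (l ^ (nω.2 * nb.1) • act b ω) η = t ω (l ^ (nb.2 * nη.1) • act b η)

theorem IsTwistedFlip.involutive (hσ : IsTwistedFlip l Gr t σ) (hl : l ≠ 0)
    (hσ_smul : ∀ (c : ℂ) (v : T), σ (c • v) = c • σ v)
    {m n : ℤ × ℤ} {ω η : Ω} (hω : ω ∈ Gr m) (hη : η ∈ Gr n) :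
    σ (σ (t ω η)) = t ω η := by
  rw [hσ m n ω η hω hη, hσ_smul, hσ n m η ω hη hω, zpow_smul_zpow_smul hl,
    show m.2 * n.1 - n.2 * m.1 + (n.2 * m.1 - m.2 * n.1) = 0 by ring, zpow_zero, one_smul]

theorem IsThetaBalanced.act_tmul_swap [SMul ℂ Ω] (hbal : IsThetaBalanced l ℬ Gr act t)
    (hl : l ≠ 0) (ht_sl : ∀ (c : ℂ) (ω η : Ω), t (c • ω) η = c • t ω η)
    (ht_sr : ∀ (c : ℂ) (ω η : Ω), t ω (c • η) = c • t ω η)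
    {na m n : ℤ × ℤ} {a : B} {ω η : Ω} (ha : a ∈ ℬ na) (hω : ω ∈ Gr m) (hη : η ∈ Gr n) :
    t (act a η) ω = l ^ (na.2 * m.1 - n.2 * na.1) • t η (act a ω) := by
  have hmove := hbal n na m η a ω hη ha hω
  rw [ht_sl, ht_sr] at hmove
  rw [sub_eq_neg_add, ← zpow_smul_zpow_smul hl, ← hmove, zpow_smul_zpow_smul hl, neg_add_cancel,
    zpow_zero, one_smul]

theorem IsTwistedFlip.act_left [SMul ℂ Ω] (hσ : IsTwistedFlip l Gr t σ)
    (hbal : IsThetaBalanced l ℬ Gr act t) (hl : l ≠ 0)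
    (hact : ∀ (m n : ℤ × ℤ) (b : B) (ω : Ω), b ∈ ℬ m → ω ∈ Gr n → act b ω ∈ Gr (m + n))
    (ht_sl : ∀ (c : ℂ) (ω η : Ω), t (c • ω) η = c • t ω η)
    (ht_sr : ∀ (c : ℂ) (ω η : Ω), t ω (c • η) = c • t ω η)
    (hσ_smul : ∀ (c : ℂ) (v : T), σ (c • v) = c • σ v)
    {na m n : ℤ × ℤ} {a : B} {ω η : Ω} (ha : a ∈ ℬ na) (hω : ω ∈ Gr m) (hη : η ∈ Gr n) :
    σ (l ^ (na.2 * m.1) • t (act a ω) η)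
      = l ^ (m.2 * n.1 - n.2 * m.1) • (l ^ (na.2 * n.1) • t (act a η) ω) := by
  rw [hσ_smul, hσ _ _ _ _ (hact na m a ω ha hω) hη, hbal.act_tmul_swap hl ht_sl ht_sr ha hω hη]
  simp only [zpow_smul_zpow_smul hl, Prod.fst_add, Prod.snd_add]
  congr 2
  ring

theorem IsTwistedFlip.act_right [SMul ℂ Ω] (hσ : IsTwistedFlip l Gr t σ)
    (hbal : IsThetaBalanced l ℬ Gr act t) (hl : l ≠ 0)
    (hact : ∀ (m n : ℤ × ℤ) (b : B) (ω : Ω), b ∈ ℬ m → ω ∈ Gr n → act b ω ∈ Gr (m + n))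
    (ht_sl : ∀ (c : ℂ) (ω η : Ω), t (c • ω) η = c • t ω η)
    (ht_sr : ∀ (c : ℂ) (ω η : Ω), t ω (c • η) = c • t ω η)
    (hσ_smul : ∀ (c : ℂ) (v : T), σ (c • v) = c • σ v)
    {na m n : ℤ × ℤ} {a : B} {ω η : Ω} (ha : a ∈ ℬ na) (hω : ω ∈ Gr m) (hη : η ∈ Gr n) :
    σ (t ω (l ^ (n.2 * na.1) • act a η))
      = l ^ (m.2 * n.1 - n.2 * m.1) • t η (l ^ (m.2 * na.1) • act a ω) := by
  rw [ht_sr, ht_sr, hσ_smul, hσ _ _ _ _ hω (hact na n a η ha hη),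
    hbal.act_tmul_swap hl ht_sl ht_sr ha hω hη]
  simp only [zpow_smul_zpow_smul hl, Prod.fst_add, Prod.snd_add]
  congr 2
  ring

theorem IsTwistedFlip.dagger_comm {star : Ω → Ω} {dag : T → T} (hσ : IsTwistedFlip l Gr t σ)
    (hl : ‖l‖ = 1) (hstar : ∀ n : ℤ × ℤ, ∀ ω ∈ Gr n, star ω ∈ Gr (-n))
    (hσ_smul : ∀ (c : ℂ) (v : T), σ (c • v) = c • σ v)
    (hdag_smul : ∀ (c : ℂ) (v : T), dag (c • v) = conj c • dag v)
    (hdag_t : ∀ (m n : ℤ × ℤ) (ω η : Ω), ω ∈ Gr m → η ∈ Gr n →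
      dag (t ω η) = l ^ (n.1 * n.2) • l ^ (m.1 * m.2) • t (star η) (star ω))
    {m n : ℤ × ℤ} {ω η : Ω} (hω : ω ∈ Gr m) (hη : η ∈ Gr n) :
    dag (σ (t ω η)) = σ (dag (t ω η)) := by
  have hl0 : l ≠ 0 := by rintro rfl; simp at hl
  rw [hσ m n ω η hω hη, hdag_smul, Complex.conj_zpow_of_norm_eq_one hl, hdag_t n m η ω hη hω,
    hdag_t m n ω η hω hη, hσ_smul, hσ_smul, hσ _ _ _ _ (hstar n η hη) (hstar m ω hω)]
  simp only [zpow_smul_zpow_smul hl0, Prod.fst_neg, Prod.snd_neg]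
  congr 2
  ring

end TwistedFlip

/-- For a ℤ²-graded (central) *-bimodule `Ω¹` over a graded *-algebra `B`
and `|λ| = 1`, the map `σ_θ(ω⊗η) := Θ(ω,η) η⊗ω` on the θ-deformed two-tensors is an
involution, a `B_θ`-bimodule map for the deformed actions, and satisfies
`† ∘ σ_θ = σ_θ⁻¹ ∘ †` (equivalently, since `σ_θ² = 1`, it commutes with the deformed
dagger `(ω⊗η)† = η†⊗ω†`, `ω† = λ^{n₁(ω)n₂(ω)}ω*`). Here `t ω η` denotes `ω ⊗_θ η`. -/
theorem stmt_11 {B Ω T : Type*} [Ring B] [Algebra ℂ B]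
    [AddCommGroup Ω] [Module ℂ Ω] [AddCommGroup T] [Module ℂ T]
    (l : ℂ) (hl : ‖l‖ = 1)
    (ℬ : ℤ × ℤ → Submodule ℂ B) (Gr : ℤ × ℤ → Submodule ℂ Ω)
    (starΩ : Ω → Ω)
    (hstarGr : ∀ n : ℤ × ℤ, ∀ ω ∈ Gr n, starΩ ω ∈ Gr (-n))
    (actl : B → Ω → Ω) (actr : Ω → B → Ω)
    (hcentral : ∀ (b : B) (ω : Ω), actr ω b = actl b ω)
    (hactGr : ∀ (m n : ℤ × ℤ) (b : B) (ω : Ω), b ∈ ℬ m → ω ∈ Gr n → actl b ω ∈ Gr (m + n))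
    (t : Ω → Ω → T)
    (ht_sl : ∀ (c : ℂ) (ω η : Ω), t (c • ω) η = c • t ω η)
    (ht_sr : ∀ (c : ℂ) (ω η : Ω), t ω (c • η) = c • t ω η)
    (ht_balθ : ∀ (nω nb nη : ℤ × ℤ) (ω : Ω) (b : B) (η : Ω),
      ω ∈ Gr nω → b ∈ ℬ nb → η ∈ Gr nη →
      t (l ^ (nω.2 * nb.1) • actr ω b) η = t ω (l ^ (nb.2 * nη.1) • actl b η))
    (σθ : T → T)
    (hσθ_s : ∀ (c : ℂ) (v : T), σθ (c • v) = c • σθ v)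
    (hσθ_t : ∀ (m n : ℤ × ℤ) (ω η : Ω), ω ∈ Gr m → η ∈ Gr n →
      σθ (t ω η) = l ^ (m.2 * n.1 - n.2 * m.1) • t η ω)
    (dagT : T → T)
    (hdagT_s : ∀ (c : ℂ) (v : T), dagT (c • v) = (starRingEnd ℂ) c • dagT v)
    (hdagT_t : ∀ (m n : ℤ × ℤ) (ω η : Ω), ω ∈ Gr m → η ∈ Gr n →
      dagT (t ω η) = l ^ (n.1 * n.2) • l ^ (m.1 * m.2) • t (starΩ η) (starΩ ω)) :
    -- σ_θ is an involution:
    (∀ (m n : ℤ × ℤ) (ω η : Ω), ω ∈ Gr m → η ∈ Gr n → σθ (σθ (t ω η)) = t ω η) ∧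
    -- σ_θ is a left B_θ-module map:
    (∀ (na m n : ℤ × ℤ) (a : B) (ω η : Ω), a ∈ ℬ na → ω ∈ Gr m → η ∈ Gr n →
      σθ (l ^ (na.2 * m.1) • t (actl a ω) η)
        = l ^ (m.2 * n.1 - n.2 * m.1) • (l ^ (na.2 * n.1) • t (actl a η) ω)) ∧
    -- σ_θ is a right B_θ-module map:
    (∀ (na m n : ℤ × ℤ) (a : B) (ω η : Ω), a ∈ ℬ na → ω ∈ Gr m → η ∈ Gr n →
      σθ (t ω (l ^ (n.2 * na.1) • actr η a))
        = l ^ (m.2 * n.1 - n.2 * m.1) • t η (l ^ (m.2 * na.1) • actr ω a)) ∧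
    -- † ∘ σ_θ = σ_θ⁻¹ ∘ † (with σ_θ⁻¹ = σ_θ):
    (∀ (m n : ℤ × ℤ) (ω η : Ω), ω ∈ Gr m → η ∈ Gr n →
      dagT (σθ (t ω η)) = σθ (dagT (t ω η))) := by
  have hl0 : l ≠ 0 := by rintro rfl; simp at hl
  simp only [hcentral] at ht_balθ ⊢
  have hσ : IsTwistedFlip l (fun n ↦ (Gr n : Set Ω)) t σθ := hσθ_t
  have hbal : IsThetaBalanced l (fun n ↦ (ℬ n : Set B)) (fun n ↦ (Gr n : Set Ω)) actl t := ht_balθ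
  exact ⟨fun m n ω η ↦ hσ.involutive hl0 hσθ_s,
    fun na m n a ω η ↦ hσ.act_left hbal hl0 hactGr ht_sl ht_sr hσθ_s,
    fun na m n a ω η ↦ hσ.act_right hbal hl0 hactGr ht_sl ht_sr hσθ_s,
    fun m n ω η ↦ hσ.dagger_comm hl hstarGr hσθ_s hdagT_s hdagT_t⟩
end

section
/- With σ_θ as above and Ψ_θ := (1 + σ_θ)/2, the map Ψ_θ is an idempotent on the two-tensors commuting with the deformed dagger, and Ψ_θ = T_θ ∘ Ψ ∘ T_θ^{−1}, where Ψ = (1+σ)/2, σ is the ordinary flip composed with no phase (σ(ω⊗η) = η⊗ω) and T_θ(ω⊗η) = λ^{−n₂(ω)n₁(η)} ω ⊗_θ η. -/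
/-!
The symmetrizer `(1 + s)/2` of any map `s` is idempotent where `s` is an involution, commutes with
every conjugate-linear map commuting with `s`, and is carried to the symmetrizer of `s'` by every
linear map intertwining `s` with `s'`. So everything reduces to three phase computations for the
braiding `σ_θ`: its phases `λ^(m₂n₁ - n₂m₁)` are antisymmetric in the degrees, so `σ_θ² = 1`;
the dagger reverses the degrees of both factors and conjugates `λ` to `λ⁻¹` (as `|λ| = 1`), so it
commutes with `σ_θ`; and the twist `λ^(-m₂n₁)` of `T_θ` absorbs the phase of `σ_θ`, so
`σ_θ ∘ T_θ = T_θ ∘ σ`.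
-/

section Symmetrizer

variable {K V W : Type*} [Field K] [AddCommGroup V] [Module K V] [AddCommGroup W] [Module K W]

theorem symmetrizer_idempotent [NeZero (2 : K)] {s P : V → V}
    (hs_add : ∀ v w, s (v + w) = s v + s w) (hs_smul : ∀ (c : K) v, s (c • v) = c • s v)
    (hP : ∀ v, P v = (2⁻¹ : K) • (v + s v)) {v : V} (hv : s (s v) = v) :
    P (P v) = P v := by
  have h2 : (2 : K) ≠ 0 := two_ne_zero
  rw [hP (P v), hP, hs_smul, hs_add, hv, ← smul_add, smul_smul, add_comm (s v) v, ← two_smul K,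
    smul_smul, mul_assoc, inv_mul_cancel₀ h2, mul_one]

theorem symmetrizer_comp_intertwining {s : V → V} {s' : W → W} {P : V → V} {P' : W → W}
    {f : V → W} (hf_add : ∀ v w, f (v + w) = f v + f w) (hf_smul : ∀ (c : K) v, f (c • v) = c • f v)
    (hP : ∀ v, P v = (2⁻¹ : K) • (v + s v)) (hP' : ∀ w, P' w = (2⁻¹ : K) • (w + s' w))
    {v : V} (hv : s' (f v) = f (s v)) :
    P' (f v) = f (P v) := by
  rw [hP', hP, hf_smul, hf_add, hv]

theorem conjLinear_comp_symmetrizer [StarRing K] {s d P : V → V}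
    (hd_add : ∀ v w, d (v + w) = d v + d w)
    (hd_smul : ∀ (c : K) v, d (c • v) = starRingEnd K c • d v)
    (hP : ∀ v, P v = (2⁻¹ : K) • (v + s v)) {v : V} (hv : d (s v) = s (d v)) :
    d (P v) = P (d v) := by
  rw [hP, hd_smul, hd_add, hv, hP, map_inv₀, map_ofNat]

end Symmetrizer

theorem RCLike.conj_zpow_of_norm_eq_one {K : Type*} [RCLike K] {z : K} (hz : ‖z‖ = 1) (k : ℤ) :
    starRingEnd K (z ^ k) = z ^ (-k) := by
  rw [map_zpow₀, ← RCLike.inv_eq_conj hz, inv_zpow, zpow_neg]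

section GradedTensors

variable {K Ω Tθ : Type*} [Field K] [AddCommGroup Ω] [Module K Ω] [AddCommGroup Tθ] [Module K Tθ]
  {l : K} {Gr : ℤ × ℤ → Submodule K Ω} {tθ : Ω → Ω → Tθ} {m n : ℤ × ℤ} {ω η : Ω}

theorem braiding_braiding_of_mem (hl : l ≠ 0) {σθ : Tθ → Tθ}
    (hσθ_s : ∀ (c : K) v, σθ (c • v) = c • σθ v)
    (hσθ_t : ∀ (m n : ℤ × ℤ) (ω η : Ω), ω ∈ Gr m → η ∈ Gr n →
      σθ (tθ ω η) = l ^ (m.2 * n.1 - n.2 * m.1) • tθ η ω)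
    (hω : ω ∈ Gr m) (hη : η ∈ Gr n) :
    σθ (σθ (tθ ω η)) = tθ ω η := by
  rw [hσθ_t m n ω η hω hη, hσθ_s, hσθ_t n m η ω hη hω, smul_smul, ← zpow_add₀ hl,
    sub_add_sub_cancel', sub_self, zpow_zero, one_smul]

theorem braiding_twist_of_mem {T : Type*} {t : Ω → Ω → T} (hl : l ≠ 0) {σ : T → T}
    {σθ : Tθ → Tθ} {f : T → Tθ}
    (hf_t : ∀ (m n : ℤ × ℤ) (ω η : Ω), ω ∈ Gr m → η ∈ Gr n →
      f (t ω η) = l ^ (-(m.2 * n.1)) • tθ ω η)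
    (hσ_t : ∀ ω η : Ω, σ (t ω η) = t η ω)
    (hσθ_s : ∀ (c : K) v, σθ (c • v) = c • σθ v)
    (hσθ_t : ∀ (m n : ℤ × ℤ) (ω η : Ω), ω ∈ Gr m → η ∈ Gr n →
      σθ (tθ ω η) = l ^ (m.2 * n.1 - n.2 * m.1) • tθ η ω)
    (hω : ω ∈ Gr m) (hη : η ∈ Gr n) :
    σθ (f (t ω η)) = f (σ (t ω η)) := by
  rw [hf_t m n ω η hω hη, hσθ_s, hσθ_t m n ω η hω hη, hσ_t, hf_t n m η ω hη hω, smul_smul,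
    ← zpow_add₀ hl, neg_add_eq_sub, sub_sub_cancel_left]

end GradedTensors

theorem dagger_braiding_of_mem {K Ω Tθ : Type*} [RCLike K] [AddCommGroup Ω] [Module K Ω]
    [AddCommGroup Tθ] [Module K Tθ] {l : K} (hl : ‖l‖ = 1) {Gr : ℤ × ℤ → Submodule K Ω}
    {starΩ : Ω → Ω} (hstarGr : ∀ n : ℤ × ℤ, ∀ ω ∈ Gr n, starΩ ω ∈ Gr (-n))
    {tθ : Ω → Ω → Tθ} {σθ d : Tθ → Tθ}
    (hσθ_s : ∀ (c : K) v, σθ (c • v) = c • σθ v)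
    (hσθ_t : ∀ (m n : ℤ × ℤ) (ω η : Ω), ω ∈ Gr m → η ∈ Gr n →
      σθ (tθ ω η) = l ^ (m.2 * n.1 - n.2 * m.1) • tθ η ω)
    (hd_smul : ∀ (c : K) v, d (c • v) = starRingEnd K c • d v)
    (hd_t : ∀ (m n : ℤ × ℤ) (ω η : Ω), ω ∈ Gr m → η ∈ Gr n →
      d (tθ ω η) = l ^ (n.1 * n.2) • l ^ (m.1 * m.2) • tθ (starΩ η) (starΩ ω))
    {m n : ℤ × ℤ} {ω η : Ω} (hω : ω ∈ Gr m) (hη : η ∈ Gr n) :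
    d (σθ (tθ ω η)) = σθ (d (tθ ω η)) := by
  have hl0 : l ≠ 0 := norm_ne_zero_iff.mp (hl ▸ one_ne_zero)
  rw [hσθ_t m n ω η hω hη, hd_smul, hd_t n m η ω hη hω, hd_t m n ω η hω hη, hσθ_s, hσθ_s,
    hσθ_t (-n) (-m) _ _ (hstarGr n η hη) (hstarGr m ω hω), RCLike.conj_zpow_of_norm_eq_one hl,
    smul_smul, smul_smul, smul_smul, smul_smul, ← zpow_add₀ hl0, ← zpow_add₀ hl0,
    ← zpow_add₀ hl0, ← zpow_add₀ hl0, Prod.fst_neg, Prod.snd_neg, Prod.fst_neg, Prod.snd_neg]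
  congr 2
  ring

/-- With `σ_θ(ω⊗η) = Θ(ω,η)η⊗ω` and `Ψ_θ = (1+σ_θ)/2`, the map `Ψ_θ` is an
idempotent on the deformed two-tensors commuting with the deformed dagger, and
`Ψ_θ = T_θ ∘ Ψ ∘ T_θ⁻¹` where `Ψ = (1+σ)/2`, `σ` the ordinary flip, and
`T_θ(ω⊗η) = λ^{−n₂(ω)n₁(η)} ω⊗_θη` (stated as `Ψ_θ ∘ T_θ = T_θ ∘ Ψ` on generators). -/
theorem stmt_12 {Ω T Tθ : Type*}
    [AddCommGroup Ω] [Module ℂ Ω] [AddCommGroup T] [Module ℂ T] [AddCommGroup Tθ] [Module ℂ Tθ]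
    (l : ℂ) (hl : ‖l‖ = 1)
    (Gr : ℤ × ℤ → Submodule ℂ Ω)
    (starΩ : Ω → Ω)
    (hstarGr : ∀ n : ℤ × ℤ, ∀ ω ∈ Gr n, starΩ ω ∈ Gr (-n))
    (t : Ω → Ω → T) (tθ : Ω → Ω → Tθ)
    (Tmap : T → Tθ)
    (hTmap_add : ∀ v w : T, Tmap (v + w) = Tmap v + Tmap w)
    (hTmap_s : ∀ (c : ℂ) (v : T), Tmap (c • v) = c • Tmap v)
    (hTmap_t : ∀ (m n : ℤ × ℤ) (ω η : Ω), ω ∈ Gr m → η ∈ Gr n →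
      Tmap (t ω η) = l ^ (-(m.2 * n.1)) • tθ ω η)
    (σ : T → T) (hσ_t : ∀ ω η : Ω, σ (t ω η) = t η ω)
    (σθ : Tθ → Tθ)
    (hσθ_add : ∀ v w : Tθ, σθ (v + w) = σθ v + σθ w)
    (hσθ_s : ∀ (c : ℂ) (v : Tθ), σθ (c • v) = c • σθ v)
    (hσθ_t : ∀ (m n : ℤ × ℤ) (ω η : Ω), ω ∈ Gr m → η ∈ Gr n →
      σθ (tθ ω η) = l ^ (m.2 * n.1 - n.2 * m.1) • tθ η ω)
    (dagθ : Tθ → Tθ)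
    (hdagθ_add : ∀ v w : Tθ, dagθ (v + w) = dagθ v + dagθ w)
    (hdagθ_s : ∀ (c : ℂ) (v : Tθ), dagθ (c • v) = (starRingEnd ℂ) c • dagθ v)
    (hdagθ_t : ∀ (m n : ℤ × ℤ) (ω η : Ω), ω ∈ Gr m → η ∈ Gr n →
      dagθ (tθ ω η) = l ^ (n.1 * n.2) • l ^ (m.1 * m.2) • tθ (starΩ η) (starΩ ω))
    (Ψ : T → T) (hΨ : ∀ v : T, Ψ v = (2⁻¹ : ℂ) • (v + σ v))
    (Ψθ : Tθ → Tθ) (hΨθ : ∀ v : Tθ, Ψθ v = (2⁻¹ : ℂ) • (v + σθ v)) :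
    ∀ (m n : ℤ × ℤ) (ω η : Ω), ω ∈ Gr m → η ∈ Gr n →
      (Ψθ (Ψθ (tθ ω η)) = Ψθ (tθ ω η)) ∧
      (dagθ (Ψθ (tθ ω η)) = Ψθ (dagθ (tθ ω η))) ∧
      (Ψθ (Tmap (t ω η)) = Tmap (Ψ (t ω η))) := by
  intro m n ω η hω hη
  have hl0 : l ≠ 0 := norm_ne_zero_iff.mp (hl ▸ one_ne_zero)
  exact ⟨symmetrizer_idempotent hσθ_add hσθ_s hΨθ
      (braiding_braiding_of_mem hl0 hσθ_s hσθ_t hω hη),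
    conjLinear_comp_symmetrizer hdagθ_add hdagθ_s hΨθ
      (dagger_braiding_of_mem hl hstarGr hσθ_s hσθ_t hdagθ_s hdagθ_t hω hη),
    symmetrizer_comp_intertwining hTmap_add hTmap_s hΨ hΨθ
      (braiding_twist_of_mem hl0 hTmap_t hσ_t hσθ_s hσθ_t hω hη)⟩
end

section
/- Let ∇→: Ω¹ → Ω¹⊗_B Ω¹ be a degree-zero right connection and ∇←: X → Ω¹⊗_B X a degree-zero left connection on a ℤ²-graded bimodule X, such that ∇→⊗1 + 1⊗∇← is well defined on Ω¹⊗_B X. Then the deformed operators satisfy ∇→_θ ⊗_θ 1 + 1 ⊗_θ ∇←_θ = H_θ ∘ (∇→⊗1 + 1⊗∇←) ∘ (T_θ^{Ω¹,X})^{−1} as maps Ω¹_θ ⊗_θ X_θ → Ω¹_θ ⊗_θ Ω¹_θ ⊗_θ X_θ, where H_θ = (T_θ^{Ω¹,Ω¹}⊗_θ 1)∘T_θ^{Ω¹⊗Ω¹,X} = (1⊗_θ T_θ^{Ω¹,X})∘T_θ^{Ω¹,Ω¹⊗X}. -/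
/-!
Both sides are additive in `∇→ω` and `∇←x`, and since the connections have degree zero these
decompose into homogeneous generators whose degrees add up to those of `ω` and `x`. On each
generator both sides are a power of `l` times the same deformed generator, and the two exponents
agree because the twist exponent `-(a.2 * b.1)` is biadditive in the degrees `a`, `b`.
-/

theorem twist_exponent_add_left (d e n : ℤ × ℤ) :
    -((d + e).2 * n.1) + -(d.2 * e.1) = -(d.2 * e.1) - d.2 * n.1 - e.2 * n.1 := by
  rw [Prod.snd_add]; ring

theorem twist_exponent_add_right (m d e : ℤ × ℤ) :
    -(m.2 * (d + e).1) + -(d.2 * e.1) = -(m.2 * d.1) - m.2 * e.1 - d.2 * e.1 := by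
  rw [Prod.fst_add]; ring

theorem smul_apply_sum_eq_of_forall {ι R M P : Type*} [Monoid R] [AddCommMonoid M]
    [AddCommGroup P] [DistribMulAction R P] (c : R) (F G : M → P)
    (hF : ∀ a b, F (a + b) = F a + F b) (hG : ∀ a b, G (a + b) = G a + G b)
    (s : Finset ι) (g : ι → M) (h : ∀ i ∈ s, c • F (g i) = G (g i)) :
    c • F (∑ i ∈ s, g i) = G (∑ i ∈ s, g i) := by
  have hFsum := map_sum (AddMonoidHom.mk' F hF) g s
  have hGsum := map_sum (AddMonoidHom.mk' G hG) g s
  simp only [AddMonoidHom.mk'_apply] at hFsum hGsum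
  rw [hFsum, hGsum, Finset.smul_sum]
  exact Finset.sum_congr rfl h

/-- The identity is checked on the generators `T_θ(ω ⊗ x)`. Here `covr = ∇→`, `covl = ∇←`, and
`E3`, `F3` (resp. `E3θ`, `F3θ`) are the canonical maps `(Ω¹⊗Ω¹) × X → Ω¹⊗Ω¹⊗X` and
`Ω¹ × (Ω¹⊗X) → Ω¹⊗Ω¹⊗X`. -/
theorem stmt_14 {Ω X T W1 W2 Tθ W1θ W2θ : Type*}
    [AddCommGroup Ω] [Module ℂ Ω] [AddCommGroup X] [Module ℂ X]
    [AddCommGroup T] [Module ℂ T] [AddCommGroup W1] [Module ℂ W1]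
    [AddCommGroup W2] [Module ℂ W2] [AddCommGroup Tθ] [Module ℂ Tθ]
    [AddCommGroup W1θ] [Module ℂ W1θ] [AddCommGroup W2θ] [Module ℂ W2θ]
    (l : ℂ) (hl : ‖l‖ = 1)
    (Gr : ℤ × ℤ → Submodule ℂ Ω) (GrX : ℤ × ℤ → Submodule ℂ X)
    (t : Ω → Ω → T) (tθ : Ω → Ω → Tθ)
    (t1 : Ω → X → W1) (t1θ : Ω → X → W1θ)
    (t3 : Ω → Ω → X → W2) (t3θ : Ω → Ω → X → W2θ)
    (Tmap : T → Tθ)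
    (hTmap_add : ∀ v w : T, Tmap (v + w) = Tmap v + Tmap w)
    (hTmap_t : ∀ (m n : ℤ × ℤ) (α β : Ω), α ∈ Gr m → β ∈ Gr n →
      Tmap (t α β) = l ^ (-(m.2 * n.1)) • tθ α β)
    (T1map : W1 → W1θ)
    (hT1map_add : ∀ v w : W1, T1map (v + w) = T1map v + T1map w)
    (hT1map_t : ∀ (m n : ℤ × ℤ) (β : Ω) (y : X), β ∈ Gr m → y ∈ GrX n →
      T1map (t1 β y) = l ^ (-(m.2 * n.1)) • t1θ β y)
    (Hθ : W2 → W2θ)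
    (hHθ_add : ∀ v w : W2, Hθ (v + w) = Hθ v + Hθ w)
    (hHθ_t : ∀ (m n p : ℤ × ℤ) (α β : Ω) (y : X), α ∈ Gr m → β ∈ Gr n → y ∈ GrX p →
      Hθ (t3 α β y) = l ^ (-(m.2 * n.1) - m.2 * p.1 - n.2 * p.1) • t3θ α β y)
    (E3 : T → X → W2)
    (hE3_add : ∀ (v w : T) (y : X), E3 (v + w) y = E3 v y + E3 w y)
    (hE3_t : ∀ (α β : Ω) (y : X), E3 (t α β) y = t3 α β y)
    (F3 : Ω → W1 → W2)
    (hF3_add : ∀ (ω : Ω) (v w : W1), F3 ω (v + w) = F3 ω v + F3 ω w)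
    (hF3_t : ∀ (ω β : Ω) (y : X), F3 ω (t1 β y) = t3 ω β y)
    (E3θ : Tθ → X → W2θ)
    (hE3θ_add : ∀ (v w : Tθ) (y : X), E3θ (v + w) y = E3θ v y + E3θ w y)
    (hE3θ_s : ∀ (c : ℂ) (v : Tθ) (y : X), E3θ (c • v) y = c • E3θ v y)
    (hE3θ_t : ∀ (α β : Ω) (y : X), E3θ (tθ α β) y = t3θ α β y)
    (F3θ : Ω → W1θ → W2θ)
    (hF3θ_add : ∀ (ω : Ω) (v w : W1θ), F3θ ω (v + w) = F3θ ω v + F3θ ω w)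
    (hF3θ_s : ∀ (ω : Ω) (c : ℂ) (v : W1θ), F3θ ω (c • v) = c • F3θ ω v)
    (hF3θ_t : ∀ (ω β : Ω) (y : X), F3θ ω (t1θ β y) = t3θ ω β y)
    (covr : Ω → T)
    (hcovr_hom : ∀ (n : ℤ × ℤ) (ω : Ω), ω ∈ Gr n →
      ∃ (k : ℕ) (α β : Fin k → Ω) (d e : Fin k → ℤ × ℤ),
        (∀ i, α i ∈ Gr (d i)) ∧ (∀ i, β i ∈ Gr (e i)) ∧ (∀ i, d i + e i = n) ∧
        covr ω = ∑ i, t (α i) (β i))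
    (covl : X → W1)
    (hcovl_hom : ∀ (n : ℤ × ℤ) (x : X), x ∈ GrX n →
      ∃ (k : ℕ) (β : Fin k → Ω) (y : Fin k → X) (d e : Fin k → ℤ × ℤ),
        (∀ i, β i ∈ Gr (d i)) ∧ (∀ i, y i ∈ GrX (e i)) ∧ (∀ i, d i + e i = n) ∧
        covl x = ∑ i, t1 (β i) (y i)) :
    ∀ (m n : ℤ × ℤ) (ω : Ω) (x : X), ω ∈ Gr m → x ∈ GrX n →
      l ^ (-(m.2 * n.1)) • (E3θ (Tmap (covr ω)) x + F3θ ω (T1map (covl x)))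
        = Hθ (E3 (covr ω) x + F3 ω (covl x)) := by
  intro m n ω x hω hx
  have hl0 : l ≠ 0 := by
    rintro rfl
    simp at hl
  obtain ⟨k, α, β, d, e, hα, hβ, hde, hcovr⟩ := hcovr_hom m ω hω
  obtain ⟨k', β', y, d', e', hβ', hy, hde', hcovl⟩ := hcovl_hom n x hx
  have hright : l ^ (-(m.2 * n.1)) • E3θ (Tmap (covr ω)) x = Hθ (E3 (covr ω) x) := by
    rw [hcovr]
    refine smul_apply_sum_eq_of_forall _ (fun v => E3θ (Tmap v) x) (fun v => Hθ (E3 v x))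
      (fun a b => by simp only [hTmap_add, hE3θ_add]) (fun a b => by simp only [hE3_add, hHθ_add])
      _ _ fun i _ => ?_
    rw [← hde i, hTmap_t _ _ _ _ (hα i) (hβ i), hE3θ_s, hE3θ_t, smul_smul, ← zpow_add₀ hl0,
      twist_exponent_add_left, hE3_t, hHθ_t _ _ _ _ _ _ (hα i) (hβ i) hx]
  have hleft : l ^ (-(m.2 * n.1)) • F3θ ω (T1map (covl x)) = Hθ (F3 ω (covl x)) := by
    rw [hcovl]
    refine smul_apply_sum_eq_of_forall _ (fun v => F3θ ω (T1map v)) (fun v => Hθ (F3 ω v))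
      (fun a b => by simp only [hT1map_add, hF3θ_add]) (fun a b => by simp only [hF3_add, hHθ_add])
      _ _ fun j _ => ?_
    rw [← hde' j, hT1map_t _ _ _ _ (hβ' j) (hy j), hF3θ_s, hF3θ_t, smul_smul, ← zpow_add₀ hl0,
      twist_exponent_add_right, hF3_t, hHθ_t _ _ _ _ _ _ hω (hβ' j) (hy j)]
  rw [smul_add, hright, hleft, hHθ_add]
end

section
/- Let G = Σ_j ω_j ⊗ ω_j† ∈ Ω¹⊗_B Ω¹ be the line element of a homogeneous frame (ω_j), which has total degree zero, and suppose the pair (∇→, ∇←) of conjugate connections on Ω¹ satisfies (∇→⊗1 + 1⊗∇←)(G) = 0 (the Hermitian condition). Then the deformed connections satisfy (∇→_θ⊗1 + 1⊗∇←_θ)(G_θ) = 0 where G_θ := T_θ(G); hence ∇→_θ is Hermitian. -/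
/-! Since the connections preserve degree, `∇→(ω)` with `ω ∈ Gr n` is a sum of tensors `α ⊗ β`
of total degree `n`. On a triple tensor the phase of `H_θ` splits as the phase of `T_θ` on two
adjacent slots times `λ^{-(n₂ p₁)}`, where `n` and `p` are the total degrees on either side of the
remaining cut. For `ω_j ∈ Gr d`, `ω_j† ∈ Gr (-d)` this extra phase is `λ^{d₁ d₂}` for both halves of
the Hermitian sum, so the deformed sum is `H_θ` of the undeformed one, which vanishes. -/

open Finset

def IsHomogeneousSum {Ω T σ ι : Type*} [SetLike σ Ω] [AddCommMonoid T] [Add ι]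
    (Gr : ι → σ) (t : Ω → Ω → T) (n : ι) (v : T) : Prop :=
  ∃ (k : ℕ) (α β : Fin k → Ω) (d e : Fin k → ι),
    (∀ i, α i ∈ Gr (d i)) ∧ (∀ i, β i ∈ Gr (e i)) ∧ (∀ i, d i + e i = n) ∧
    v = ∑ i, t (α i) (β i)

namespace IsHomogeneousSum

variable {Ω T σ ι : Type*} [SetLike σ Ω] [AddCommMonoid T] [Add ι]
  {Gr : ι → σ} {t : Ω → Ω → T} {n : ι} {v : T}

theorem map_eq_smul_map {R X : Type*} [Monoid R] [AddCommMonoid X] [DistribMulAction R X]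
    (hv : IsHomogeneousSum Gr t n v) (f g : T →+ X) (c : R)
    (h : ∀ m m' α β, α ∈ Gr m → β ∈ Gr m' → m + m' = n → f (t α β) = c • g (t α β)) :
    f v = c • g v := by
  obtain ⟨k, α, β, d, e, hα, hβ, hde, rfl⟩ := hv
  simp only [map_sum, smul_sum]
  exact sum_congr rfl fun i _ => h _ _ _ _ (hα i) (hβ i) (hde i)

end IsHomogeneousSum

section Deformation

variable {𝕜 Ω T Tθ W Wθ σ : Type*} [Field 𝕜] [SetLike σ Ω]
  [AddCommMonoid T] [AddCommMonoid W] [AddCommMonoid Tθ] [Module 𝕜 Tθ]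
  [AddCommMonoid Wθ] [Module 𝕜 Wθ]
  {l : 𝕜} {Gr : ℤ × ℤ → σ} {t : Ω → Ω → T} {tθ : Ω → Ω → Tθ}
  {t3 : Ω → Ω → Ω → W} {t3θ : Ω → Ω → Ω → Wθ}
  {Tmap : T →+ Tθ} {Hθ : W →+ Wθ}

theorem IsHomogeneousSum.deform_tensor_right (hl : l ≠ 0)
    (hTmap : ∀ m n α β, α ∈ Gr m → β ∈ Gr n → Tmap (t α β) = l ^ (-(m.2 * n.1)) • tθ α β)
    (hHθ : ∀ m n p α β γ, α ∈ Gr m → β ∈ Gr n → γ ∈ Gr p →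
      Hθ (t3 α β γ) = l ^ (-(m.2 * n.1) - m.2 * p.1 - n.2 * p.1) • t3θ α β γ)
    {γ : Ω} {p : ℤ × ℤ} (hγ : γ ∈ Gr p) (E : T →+ W) (Eθ : Tθ →ₗ[𝕜] Wθ)
    (hE : ∀ α β, E (t α β) = t3 α β γ) (hEθ : ∀ α β, Eθ (tθ α β) = t3θ α β γ)
    {n : ℤ × ℤ} {v : T} (hv : IsHomogeneousSum Gr t n v) :
    Hθ (E v) = l ^ (-(n.2 * p.1)) • Eθ (Tmap v) := by
  refine hv.map_eq_smul_map (Hθ.comp E) (Eθ.toAddMonoidHom.comp Tmap) _ ?_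
  rintro m m' α β hα hβ rfl
  simp only [AddMonoidHom.comp_apply, LinearMap.toAddMonoidHom_coe, hE, hEθ,
    hHθ _ _ _ _ _ _ hα hβ hγ, hTmap _ _ _ _ hα hβ, map_smul, smul_smul, ← zpow_add₀ hl,
    Prod.snd_add]
  congr 2
  ring

theorem IsHomogeneousSum.deform_tensor_left (hl : l ≠ 0)
    (hTmap : ∀ m n α β, α ∈ Gr m → β ∈ Gr n → Tmap (t α β) = l ^ (-(m.2 * n.1)) • tθ α β)
    (hHθ : ∀ m n p α β γ, α ∈ Gr m → β ∈ Gr n → γ ∈ Gr p →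
      Hθ (t3 α β γ) = l ^ (-(m.2 * n.1) - m.2 * p.1 - n.2 * p.1) • t3θ α β γ)
    {ω : Ω} {m : ℤ × ℤ} (hω : ω ∈ Gr m) (F : T →+ W) (Fθ : Tθ →ₗ[𝕜] Wθ)
    (hF : ∀ β γ, F (t β γ) = t3 ω β γ) (hFθ : ∀ β γ, Fθ (tθ β γ) = t3θ ω β γ)
    {n : ℤ × ℤ} {v : T} (hv : IsHomogeneousSum Gr t n v) :
    Hθ (F v) = l ^ (-(m.2 * n.1)) • Fθ (Tmap v) := by
  refine hv.map_eq_smul_map (Hθ.comp F) (Fθ.toAddMonoidHom.comp Tmap) _ ?_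
  rintro n' p β γ hβ hγ rfl
  simp only [AddMonoidHom.comp_apply, LinearMap.toAddMonoidHom_coe, hF, hFθ,
    hHθ _ _ _ _ _ _ hω hβ hγ, hTmap _ _ _ _ hβ hγ, map_smul, smul_smul, ← zpow_add₀ hl,
    Prod.fst_add]
  congr 2
  ring

end Deformation

/-- If `G = Σ_j ω_j ⊗ ω_j†` (total degree zero, frame `(ω_j)` homogeneous of
degrees `d j`, so `ω_j† ∈ Gr (−d j)`) satisfies the Hermitian condition
`(∇→⊗1 + 1⊗∇←)(G) = 0`, then the deformed connections satisfy
`(∇→_θ⊗1 + 1⊗∇←_θ)(G_θ) = 0` for `G_θ = T_θ(G) = Σ_j λ^{(d j)₁(d j)₂} ω_j ⊗_θ ω_j†`;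
hence `∇→_θ` is Hermitian. -/
theorem stmt_15 {Ω T W2 Tθ W2θ : Type*}
    [AddCommGroup Ω] [Module ℂ Ω] [AddCommGroup T] [Module ℂ T]
    [AddCommGroup W2] [Module ℂ W2] [AddCommGroup Tθ] [Module ℂ Tθ]
    [AddCommGroup W2θ] [Module ℂ W2θ]
    (l : ℂ) (hl : ‖l‖ = 1)
    (Gr : ℤ × ℤ → Submodule ℂ Ω)
    (t : Ω → Ω → T) (tθ : Ω → Ω → Tθ)
    (t3 : Ω → Ω → Ω → W2) (t3θ : Ω → Ω → Ω → W2θ)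
    (Tmap : T → Tθ)
    (hTmap_add : ∀ v w : T, Tmap (v + w) = Tmap v + Tmap w)
    (hTmap_t : ∀ (m n : ℤ × ℤ) (α β : Ω), α ∈ Gr m → β ∈ Gr n →
      Tmap (t α β) = l ^ (-(m.2 * n.1)) • tθ α β)
    (Hθ : W2 → W2θ)
    (hHθ_add : ∀ v w : W2, Hθ (v + w) = Hθ v + Hθ w)
    (hHθ_t : ∀ (m n p : ℤ × ℤ) (α β γ : Ω), α ∈ Gr m → β ∈ Gr n → γ ∈ Gr p →
      Hθ (t3 α β γ) = l ^ (-(m.2 * n.1) - m.2 * p.1 - n.2 * p.1) • t3θ α β γ)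
    (E3 : T → Ω → W2)
    (hE3_add : ∀ (v w : T) (γ : Ω), E3 (v + w) γ = E3 v γ + E3 w γ)
    (hE3_t : ∀ α β γ : Ω, E3 (t α β) γ = t3 α β γ)
    (F3 : Ω → T → W2)
    (hF3_add : ∀ (ω : Ω) (v w : T), F3 ω (v + w) = F3 ω v + F3 ω w)
    (hF3_t : ∀ ω β γ : Ω, F3 ω (t β γ) = t3 ω β γ)
    (E3θ : Tθ → Ω → W2θ)
    (hE3θ_add : ∀ (v w : Tθ) (γ : Ω), E3θ (v + w) γ = E3θ v γ + E3θ w γ)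
    (hE3θ_s : ∀ (c : ℂ) (v : Tθ) (γ : Ω), E3θ (c • v) γ = c • E3θ v γ)
    (hE3θ_t : ∀ α β γ : Ω, E3θ (tθ α β) γ = t3θ α β γ)
    (F3θ : Ω → Tθ → W2θ)
    (hF3θ_add : ∀ (ω : Ω) (v w : Tθ), F3θ ω (v + w) = F3θ ω v + F3θ ω w)
    (hF3θ_s : ∀ (ω : Ω) (c : ℂ) (v : Tθ), F3θ ω (c • v) = c • F3θ ω v)
    (hF3θ_t : ∀ ω β γ : Ω, F3θ ω (tθ β γ) = t3θ ω β γ)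
    (covr : Ω → T) (covl : Ω → T)
    (hcovr_hom : ∀ (n : ℤ × ℤ) (ω : Ω), ω ∈ Gr n →
      ∃ (k : ℕ) (α β : Fin k → Ω) (d e : Fin k → ℤ × ℤ),
        (∀ i, α i ∈ Gr (d i)) ∧ (∀ i, β i ∈ Gr (e i)) ∧ (∀ i, d i + e i = n) ∧
        covr ω = ∑ i, t (α i) (β i))
    (hcovl_hom : ∀ (n : ℤ × ℤ) (ω : Ω), ω ∈ Gr n →
      ∃ (k : ℕ) (α β : Fin k → Ω) (d e : Fin k → ℤ × ℤ),
        (∀ i, α i ∈ Gr (d i)) ∧ (∀ i, β i ∈ Gr (e i)) ∧ (∀ i, d i + e i = n) ∧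
        covl ω = ∑ i, t (α i) (β i))
    -- the homogeneous frame data of the line element G = Σ_j ω_j ⊗ ω_j†:
    (N : ℕ) (ωs ηs : Fin N → Ω) (d : Fin N → ℤ × ℤ)
    (hωs : ∀ j, ωs j ∈ Gr (d j)) (hηs : ∀ j, ηs j ∈ Gr (-(d j)))
    -- the Hermitian condition (∇→⊗1 + 1⊗∇←)(G) = 0:
    (hHerm : ∑ j, (E3 (covr (ωs j)) (ηs j) + F3 (ωs j) (covl (ηs j))) = 0) :
    -- the deformed Hermitian condition (∇→_θ⊗1 + 1⊗∇←_θ)(G_θ) = 0: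
    ∑ j, l ^ ((d j).1 * (d j).2) •
        (E3θ (Tmap (covr (ωs j))) (ηs j) + F3θ (ωs j) (Tmap (covl (ηs j)))) = 0 := by
  have hl0 : l ≠ 0 := by rintro rfl; simp at hl
  let TM : T →+ Tθ := .mk' Tmap hTmap_add
  let HM : W2 →+ W2θ := .mk' Hθ hHθ_add
  have hterm : ∀ j, Hθ (E3 (covr (ωs j)) (ηs j) + F3 (ωs j) (covl (ηs j))) =
      l ^ ((d j).1 * (d j).2) •
        (E3θ (Tmap (covr (ωs j))) (ηs j) + F3θ (ωs j) (Tmap (covl (ηs j)))) := by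
    intro j
    have hright := IsHomogeneousSum.deform_tensor_right (Tmap := TM) (Hθ := HM) hl0
      hTmap_t hHθ_t (hηs j) (.mk' (E3 · (ηs j)) (hE3_add · · _))
      ⟨⟨(E3θ · (ηs j)), (hE3θ_add · · _)⟩, (hE3θ_s · · _)⟩ (hE3_t · · _) (hE3θ_t · · _)
      (hcovr_hom _ _ (hωs j))
    have hleft := IsHomogeneousSum.deform_tensor_left (Tmap := TM) (Hθ := HM) hl0
      hTmap_t hHθ_t (hωs j) (.mk' (F3 (ωs j)) (hF3_add _))
      ⟨⟨F3θ (ωs j), hF3θ_add _⟩, hF3θ_s _⟩ (hF3_t _) (hF3θ_t _)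
      (hcovl_hom _ _ (hηs j))
    have hphase : -((d j).2 * (-d j).1) = (d j).1 * (d j).2 := by rw [Prod.fst_neg]; ring
    rw [hphase] at hright hleft
    rw [hHθ_add, smul_add]
    exact congr_arg₂ (· + ·) hright hleft
  calc _ = ∑ j, HM (E3 (covr (ωs j)) (ηs j) + F3 (ωs j) (covl (ηs j))) :=
        (sum_congr rfl fun j _ => hterm j).symm
    _ = 0 := by rw [← map_sum, hHerm, map_zero]
end
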